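/- arXiv:math/0608510 — 3 statements merged into one kernel-verified Lean document; each statement's English description precedes it below -/
import Mathlib

section
/- Let q ∈ ℝ, q ≠ 0, and v > 0, and set A_T = max(2|t_q(v)| − 1, 0) and A_R = max(2|r_q(v)| − 1, 0). Then A_T + A_R < 1; that is, the sum of the amplitudes of the transmitted and reflected solitons is strictly less than the amplitude of the incoming unit soliton, so soliton scattering by the delta potential is nonelastic. -/
/-!
With `a = |t_q(v)|` and `b = |r_q(v)|` we have `a² + b² = 1` and `a, b > 0`, so `a, b < 1`.
If only one amplitude is nonzero it is `2a - 1 < 1`; if both are, their sum is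
`2(a + b) - 2 < 1` because `a + b ≤ √2 < 3/2`.
-/

open Complex

lemma max_two_mul_sub_one_add_lt_one {a b : ℝ} (ha : 0 < a) (hb : 0 < b)
    (hab : a ^ 2 + b ^ 2 = 1) : max (2 * a - 1) 0 + max (2 * b - 1) 0 < 1 := by
  have ha1 : a < 1 := by nlinarith
  have hb1 : b < 1 := by nlinarith
  rcases le_total (2 * a - 1) 0 with h1 | h1 <;> rcases le_total (2 * b - 1) 0 with h2 | h2 <;>
    simp only [max_eq_left, max_eq_right, h1, h2] <;> nlinarith [sq_nonneg (a - b)]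

lemma sq_norm_I_mul_ofReal_sub_ofReal (v q : ℝ) : ‖I * v - q‖ ^ 2 = v ^ 2 + q ^ 2 := by
  rw [Complex.sq_norm, normSq_apply]
  simp only [sub_re, mul_re, I_re, ofReal_re, zero_mul, I_im, ofReal_im, mul_zero, sub_self,
    zero_sub, mul_neg, neg_mul, neg_neg, sub_im, mul_im, one_mul, zero_add, sub_zero]
  ring

lemma I_mul_ofReal_sub_ofReal_ne_zero {v : ℝ} (hv : v ≠ 0) (q : ℝ) : I * v - q ≠ 0 := by
  intro h
  exact hv (by simpa using congrArg im h)

lemma sq_norm_transmission_add_sq_norm_reflection {v : ℝ} (hv : v ≠ 0) (q : ℝ) :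
    ‖I * v / (I * v - q)‖ ^ 2 + ‖(q : ℂ) / (I * v - q)‖ ^ 2 = 1 := by
  have hz : ‖I * v - q‖ ^ 2 ≠ 0 := by
    simpa using I_mul_ofReal_sub_ofReal_ne_zero hv q
  rw [norm_div, norm_div, div_pow, div_pow, ← add_div, div_eq_one_iff_eq hz,
    sq_norm_I_mul_ofReal_sub_ofReal, norm_mul, norm_I, one_mul, norm_real, norm_real,
    Real.norm_eq_abs, Real.norm_eq_abs, sq_abs, sq_abs]

/-- For `q ≠ 0` and `v > 0`, the amplitudes `A_T = max(2|t_q(v)| - 1, 0)` and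
`A_R = max(2|r_q(v)| - 1, 0)` of the transmitted and reflected solitons satisfy
`A_T + A_R < 1`: soliton scattering by the delta potential is nonelastic. -/
theorem soliton_scattering_nonelastic (q v : ℝ) (hq : q ≠ 0) (hv : 0 < v)
    (AT AR : ℝ)
    (hAT : AT = max (2 * ‖Complex.I * (v : ℂ) / (Complex.I * v - q)‖ - 1) 0)
    (hAR : AR = max (2 * ‖(q : ℂ) / (Complex.I * v - q)‖ - 1) 0) :
    AT + AR < 1 := by
  have hz := I_mul_ofReal_sub_ofReal_ne_zero hv.ne' q
  have ht : 0 < ‖I * v / (I * v - q)‖ :=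
    norm_pos_iff.mpr (div_ne_zero (mul_ne_zero I_ne_zero (ofReal_ne_zero.mpr hv.ne')) hz)
  have hr : 0 < ‖(q : ℂ) / (I * v - q)‖ :=
    norm_pos_iff.mpr (div_ne_zero (ofReal_ne_zero.mpr hq) hz)
  rw [hAT, hAR]
  exact max_two_mul_sub_one_add_lt_one ht hr (sq_norm_transmission_add_sq_norm_reflection hv.ne' q)
end

section
/- Let q < 0 and λ > |q|, and define u(x,t) = e^{iλ²t/2}·λ·sech(λ|x| + artanh(|q|/λ)). Then for each t, u(·,t) is continuous on ℝ; u satisfies the free cubic NLS i·∂ₜu + (1/2)·∂ₓ²u + |u|²·u = 0 at every (x,t) with x ≠ 0; and the one-sided spatial derivatives satisfy the jump condition ∂ₓu(0⁺,t) − ∂ₓu(0⁻,t) = 2q·u(0,t) for every t. Hence u is a nonlinear bound state of the Gross–Pitaevskii equation i∂ₜu + (1/2)∂ₓ²u − qδ₀(x)u + u|u|² = 0. -/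
/-!
Away from the origin `u` coincides, locally in `x`, with the standing wave `e^{iλ²t/2} φ(x)` of
a sech profile `φ(y) = λ / cosh (±λ y + c)`, and every such profile solves
`φ'' = λ² φ - 2 φ³`, which is exactly the NLS for a standing wave of frequency `λ²`.
At the origin `u(·, t) = g (|·|)` with `g` smooth, so the one-sided derivatives are `±g'(0)` and
the jump is `2 g'(0) = -2 λ² e^{iλ²t/2} sinh c / cosh² c`; the choice `c = artanh (|q| / λ)`,
i.e. `λ tanh c = |q| = -q`, turns this into `2 q u(0, t)`.
-/

open Set

/-- Inverse hyperbolic tangent: `artanh y = (1/2) log((1+y)/(1-y))` (for `|y| < 1`). -/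
noncomputable def artanh (y : ℝ) : ℝ := Real.log ((1 + y) / (1 - y)) / 2

open Filter Topology

lemma tanh_artanh {y : ℝ} (hy : |y| < 1) : Real.tanh (artanh y) = y := by
  obtain ⟨hy₀, hy₁⟩ := abs_lt.mp hy
  have hexp : Real.exp (artanh y) ^ 2 = (1 + y) / (1 - y) := by
    rw [← Real.exp_nat_mul, artanh, Nat.cast_two, mul_div_cancel₀ _ two_ne_zero,
      Real.exp_log (div_pos (by linarith) (by linarith))]
  have hpos := Real.exp_pos (artanh y)
  rw [Real.tanh_eq_sinh_div_cosh, Real.sinh_eq, Real.cosh_eq, Real.exp_neg]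
  field_simp at hexp ⊢
  linear_combination hexp

lemma mul_sinh_artanh_div {p lam : ℝ} (hp : |p| < lam) :
    lam * Real.sinh (artanh (p / lam)) = p * Real.cosh (artanh (p / lam)) := by
  have hlam : 0 < lam := (abs_nonneg p).trans_lt hp
  have htanh := tanh_artanh (y := p / lam) (by rwa [abs_div, abs_of_pos hlam, div_lt_one hlam])
  rw [Real.tanh_eq_sinh_div_cosh, div_eq_div_iff (Real.cosh_pos _).ne' hlam.ne'] at htanh
  linarith

noncomputable def standingWave (ω : ℝ) (φ : ℝ → ℝ) (x t : ℝ) : ℂ :=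
  Complex.exp (Complex.I * ω * t / 2) * φ x

noncomputable def nlsResidual (u : ℝ → ℝ → ℂ) (x t : ℝ) : ℂ :=
  Complex.I * deriv (fun s => u x s) t
    + (1 / 2) * deriv (fun y => deriv (fun z => u z t) y) x
    + (‖u x t‖ : ℂ) ^ 2 * u x t

lemma nlsResidual_congr {u w : ℝ → ℝ → ℂ} {x : ℝ} (h : u =ᶠ[𝓝 x] w) (t : ℝ) :
    nlsResidual u x t = nlsResidual w x t := by
  have hspace : (fun z => u z t) =ᶠ[𝓝 x] fun z => w z t := h.mono fun y hy => congrFun hy t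
  simp only [nlsResidual, h.eq_of_nhds, hspace.deriv.deriv_eq]

section StandingWave

variable {ω : ℝ} {φ : ℝ → ℝ}

lemma continuous_standingWave (hφ : Continuous φ) (t : ℝ) :
    Continuous fun x => standingWave ω φ x t :=
  continuous_const.mul (Complex.continuous_ofReal.comp hφ)

lemma hasDerivAt_standingWave_time (x t : ℝ) :
    HasDerivAt (fun s => standingWave ω φ x s)
      (Complex.I * ω / 2 * standingWave ω φ x t) t := by
  have hphase : HasDerivAt (fun s : ℝ => Complex.I * ω * s / 2) (Complex.I * ω / 2) t := by
    simpa using ((hasDerivAt_id t).ofReal_comp.const_mul (Complex.I * ω)).div_const 2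
  exact (hphase.cexp.mul_const (φ x : ℂ)).congr_deriv (by rw [standingWave]; ring)

lemma hasDerivAt_standingWave_space {φ' x : ℝ} (hφ : HasDerivAt φ φ' x) (t : ℝ) :
    HasDerivAt (fun y => standingWave ω φ y t)
      (Complex.exp (Complex.I * ω * t / 2) * φ') x :=
  hφ.ofReal_comp.const_mul _

lemma norm_standingWave (x t : ℝ) : ‖standingWave ω φ x t‖ = |φ x| := by
  rw [standingWave, norm_mul, Complex.norm_exp, Complex.norm_real, Real.norm_eq_abs]
  simp

lemma nlsResidual_standingWave {φ' : ℝ → ℝ} {x : ℝ} (hφ : ∀ y, HasDerivAt φ (φ' y) y)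
    (hφ' : HasDerivAt φ' (ω * φ x - 2 * φ x ^ 3) x) (t : ℝ) :
    nlsResidual (standingWave ω φ) x t = 0 := by
  have hspace : deriv (fun y => standingWave ω φ y t) =
      fun y => Complex.exp (Complex.I * ω * t / 2) * φ' y :=
    funext fun y => (hasDerivAt_standingWave_space (hφ y) t).deriv
  have hsq : (‖standingWave ω φ x t‖ : ℂ) ^ 2 = (φ x : ℂ) ^ 2 := by
    rw [norm_standingWave, ← Complex.ofReal_pow, sq_abs, Complex.ofReal_pow]
  rw [nlsResidual, (hasDerivAt_standingWave_time x t).deriv, hspace,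
    (hφ'.ofReal_comp.const_mul _).deriv, hsq, standingWave]
  push_cast
  linear_combination (ω / 2 * Complex.exp (Complex.I * ω * t / 2) * φ x) * Complex.I_sq

lemma standingWave_eventuallyEq {ψ : ℝ → ℝ} {x : ℝ} (h : φ =ᶠ[𝓝 x] ψ) :
    standingWave ω φ =ᶠ[𝓝 x] standingWave ω ψ :=
  h.mono fun y hy => funext fun s => by rw [standingWave, standingWave, hy]

end StandingWave

lemma hasDerivAt_div_cosh_affine (lam a b y : ℝ) :
    HasDerivAt (fun z => lam / Real.cosh (a * z + b))
      (-(lam * a * Real.sinh (a * y + b)) / Real.cosh (a * y + b) ^ 2) y := by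
  have hcosh := (((hasDerivAt_id y).const_mul a).add_const b).cosh
  simp only [mul_one, id] at hcosh
  exact ((hasDerivAt_const y lam).div hcosh (Real.cosh_pos _).ne').congr_deriv (by ring)

lemma hasDerivAt_sinh_div_cosh_sq_affine {lam a : ℝ} (ha : a ^ 2 = lam ^ 2) (b y : ℝ) :
    HasDerivAt (fun z => -(lam * a * Real.sinh (a * z + b)) / Real.cosh (a * z + b) ^ 2)
      (lam ^ 2 * (lam / Real.cosh (a * y + b)) - 2 * (lam / Real.cosh (a * y + b)) ^ 3) y := by
  have hlin : HasDerivAt (fun z : ℝ => a * z + b) a y := by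
    simpa using ((hasDerivAt_id y).const_mul a).add_const b
  have hcosh := (Real.cosh_pos (a * y + b)).ne'
  refine ((hlin.sinh.const_mul (lam * a)).fun_neg.div (hlin.cosh.fun_pow 2)
    (pow_ne_zero 2 hcosh)).congr_deriv ?_
  have hpyth := Real.cosh_sq_sub_sinh_sq (a * y + b)
  set θ := a * y + b
  field_simp
  simp only [Nat.cast_ofNat, Nat.add_one_sub_one, pow_one]
  linear_combination lam * (2 * Real.sinh θ ^ 2 * Real.cosh θ - Real.cosh θ ^ 3) * ha
    - 2 * lam ^ 3 * Real.cosh θ * hpyth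

lemma exists_eventually_abs_eq_mul {x : ℝ} (hx : x ≠ 0) :
    ∃ a : ℝ, a ^ 2 = 1 ∧ ∀ᶠ y in 𝓝 x, |y| = a * y := by
  rcases hx.lt_or_gt with hneg | hpos
  · refine ⟨-1, by norm_num, ?_⟩
    filter_upwards [Iio_mem_nhds hneg] with y hy
    rw [abs_of_neg hy, neg_one_mul]
  · refine ⟨1, by norm_num, ?_⟩
    filter_upwards [Ioi_mem_nhds hpos] with y hy
    rw [abs_of_pos hy, one_mul]

lemma derivWithin_Ici_sub_derivWithin_Iic_comp_abs {E : Type*} [NormedAddCommGroup E]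
    [NormedSpace ℝ E] {g : ℝ → E} {g' : E} (hg : HasDerivAt g g' 0) :
    derivWithin (fun x => g |x|) (Ici 0) 0 - derivWithin (fun x => g |x|) (Iic 0) 0 = 2 • g' := by
  have hright : HasDerivWithinAt (fun x => g |x|) g' (Ici 0) 0 :=
    hg.hasDerivWithinAt.congr_of_mem (fun x hx => by rw [abs_of_nonneg hx]) self_mem_Ici
  have hleft : HasDerivWithinAt (fun x => g |x|) (-g') (Iic 0) 0 :=
    (HasDerivAt.comp_const_sub 0 0 (by rwa [sub_zero])).hasDerivWithinAt.congr_of_mem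
      (fun x hx => by rw [abs_of_nonpos hx, zero_sub]) self_mem_Iic
  rw [hright.derivWithin (uniqueDiffWithinAt_Ici 0), hleft.derivWithin (uniqueDiffWithinAt_Iic 0),
    sub_neg_eq_add, two_nsmul]

/-- For `q < 0` and `λ > |q|`, the function
`u(x,t) = e^{iλ²t/2} λ sech(λ|x| + artanh(|q|/λ))` is, for each `t`, continuous in `x`;
it solves the free cubic NLS `i ∂ₜ u + (1/2) ∂ₓ² u + |u|² u = 0` at every `(x,t)` with
`x ≠ 0`; and its one-sided spatial derivatives satisfy
`∂ₓu(0⁺,t) - ∂ₓu(0⁻,t) = 2 q u(0,t)`.  Hence `u` is a nonlinear bound state of the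
Gross–Pitaevskii equation `i ∂ₜ u + (1/2) ∂ₓ² u - q δ₀ u + u|u|² = 0`. -/
theorem nonlinear_bound_state (q lam : ℝ) (hq : q < 0) (hlam : |q| < lam)
    (u : ℝ → ℝ → ℂ)
    (hu : ∀ x t : ℝ, u x t = Complex.exp (Complex.I * (lam ^ 2 : ℝ) * t / 2) *
      (lam / Real.cosh (lam * |x| + artanh (|q| / lam)))) :
    (∀ t : ℝ, Continuous fun x => u x t) ∧
    (∀ x t : ℝ, x ≠ 0 →
      Complex.I * deriv (fun s => u x s) t
        + (1 / 2) * deriv (fun y => deriv (fun z => u z t) y) x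
        + (‖u x t‖ : ℂ) ^ 2 * u x t = 0) ∧
    (∀ t : ℝ,
      derivWithin (fun x => u x t) (Ici 0) 0 - derivWithin (fun x => u x t) (Iic 0) 0
        = 2 * q * u 0 t) := by
  set c := artanh (|q| / lam)
  obtain rfl : u = standingWave (lam ^ 2) (fun y => lam / Real.cosh (lam * |y| + c)) := by
    funext x t
    rw [hu, standingWave]
    push_cast
    rfl
  refine ⟨fun t => continuous_standingWave ?_ t, fun x t hx => ?_, fun t => ?_⟩
  · exact continuous_const.div (by fun_prop) fun y => (Real.cosh_pos _).ne'
  · obtain ⟨a, ha, habs⟩ := exists_eventually_abs_eq_mul hx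
    have hprofile : (fun y => lam / Real.cosh (lam * |y| + c)) =ᶠ[𝓝 x]
        fun y => lam / Real.cosh (lam * a * y + c) :=
      habs.mono fun y hy => by beta_reduce; rw [hy, mul_assoc]
    have ha' : (lam * a) ^ 2 = lam ^ 2 := by rw [mul_pow, ha, mul_one]
    exact (nlsResidual_congr (standingWave_eventuallyEq hprofile) t).trans
      (nlsResidual_standingWave (fun y => hasDerivAt_div_cosh_affine lam (lam * a) c y)
        (hasDerivAt_sinh_div_cosh_sq_affine ha' c x) t)
  · have hsinh : lam * Real.sinh c = -q * Real.cosh c := by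
      rw [← abs_of_neg hq]
      exact mul_sinh_artanh_div (by rwa [abs_abs])
    refine (derivWithin_Ici_sub_derivWithin_Iic_comp_abs
      (hasDerivAt_standingWave_space (hasDerivAt_div_cosh_affine lam lam c 0) t)).trans ?_
    have hslope : -(lam * lam * Real.sinh (lam * 0 + c)) / Real.cosh (lam * 0 + c) ^ 2
        = q * (lam / Real.cosh (lam * |0| + c)) := by
      rw [mul_zero, abs_zero, mul_zero, zero_add]
      field_simp
      linear_combination -lam * hsinh
    rw [hslope, standingWave, nsmul_eq_mul]
    push_cast
    ring
end

section
/- Let α ∈ (0,1) with α ≠ 1/2 and let λ ∈ ℝ. Let a(λ) = Γ(1/2 − iλ)² / (Γ(1/2 + α − iλ)·Γ(1/2 − α − iλ)) and b(λ) = i·sin(πα)/cosh(πλ), where Γ is the complex Gamma function. Then the Zakharov–Shabat unitarity relation holds: |a(λ)|² + |b(λ)|² = 1; equivalently, |Γ(1/2 − iλ)² / (Γ(1/2 + α − iλ)·Γ(1/2 − α − iλ))|² = 1 − sin²(πα)/cosh²(πλ). -/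
/-!
Since `conj (Γ s) = Γ (conj s)`, Euler's reflection formula gives
`‖Γ w‖ ‖Γ (1 - conj w)‖ = ‖Γ w Γ (1 - w)‖ = π / ‖sin (π w)‖`. For `z = 1/2 - iλ` on the critical
line `1 - conj z = z`, and for `w = 1/2 + α - iλ` one has `1 - conj w = 1/2 - α - iλ`, so
`‖a‖ = ‖sin (π w)‖ / ‖sin (π z)‖`. Finally `‖sin (x + iy)‖² = sin² x + sinh² y` evaluates this
quotient of sines to `(cosh² (πλ) - sin² (πα)) / cosh² (πλ)`.
-/

open Complex ComplexConjugate
open scoped Real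

-- At the poles of `Γ` both sides vanish, by the junk values `Γ (-n) = 0` and `π / 0 = 0`.
theorem Complex.norm_Gamma_mul_norm_Gamma_one_sub_conj (z : ℂ) :
    ‖Gamma z‖ * ‖Gamma (1 - conj z)‖ = π / ‖sin (π * z)‖ := by
  have h : Gamma (1 - conj z) = conj (Gamma (1 - z)) := by
    rw [← Gamma_conj, map_sub, map_one]
  rw [h, norm_conj, ← norm_mul, Gamma_mul_Gamma_one_sub, norm_div, norm_real,
    Real.norm_of_nonneg Real.pi_pos.le]

theorem Complex.norm_Gamma_sq_div_Gamma_mul_Gamma_one_sub_conj {z : ℂ} (hz : 1 - conj z = z)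
    (w : ℂ) : ‖Gamma z ^ 2 / (Gamma w * Gamma (1 - conj w))‖ = ‖sin (π * w)‖ / ‖sin (π * z)‖ := by
  have hzz := norm_Gamma_mul_norm_Gamma_one_sub_conj z
  rw [hz] at hzz
  rw [norm_div, norm_pow, norm_mul, sq, hzz, norm_Gamma_mul_norm_Gamma_one_sub_conj,
    div_div_div_cancel_left' _ _ Real.pi_ne_zero]

theorem Complex.norm_sin_add_mul_I_sq (x y : ℝ) :
    ‖sin (x + y * I)‖ ^ 2 = Real.sin x ^ 2 + Real.sinh y ^ 2 := by
  rw [sin_add_mul_I, ← ofReal_sin, ← ofReal_cos, ← ofReal_cosh, ← ofReal_sinh, ← ofReal_mul,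
    ← ofReal_mul, Complex.sq_norm, normSq_add_mul_I]
  linear_combination Real.sin x ^ 2 * Real.cosh_sq y + Real.sinh y ^ 2 * Real.sin_sq_add_cos_sq x

theorem Complex.norm_sin_pi_mul_half_add_sub_mul_I_sq (α t : ℝ) :
    ‖sin (π * (1 / 2 + α - I * t))‖ ^ 2 = Real.cosh (π * t) ^ 2 - Real.sin (π * α) ^ 2 := by
  have h : (π * (1 / 2 + α - I * t) : ℂ) = ↑(π * α + π / 2) + ↑(-(π * t)) * I := by
    push_cast; ring
  rw [h, norm_sin_add_mul_I_sq, Real.sin_add_pi_div_two, Real.sinh_neg, neg_sq]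
  linear_combination Real.sin_sq_add_cos_sq (π * α) - Real.cosh_sq (π * t)

theorem zakharov_shabat_unitarity_general (α lam : ℝ) (a b : ℂ)
    (ha : a = Complex.Gamma (1 / 2 - Complex.I * lam) ^ 2 /
      (Complex.Gamma (1 / 2 + α - Complex.I * lam) *
        Complex.Gamma (1 / 2 - α - Complex.I * lam)))
    (hb : b = Complex.I * Real.sin (Real.pi * α) / Real.cosh (Real.pi * lam)) :
    ‖a‖ ^ 2 + ‖b‖ ^ 2 = 1 ∧
    ‖a‖ ^ 2 = 1 - Real.sin (Real.pi * α) ^ 2 / Real.cosh (Real.pi * lam) ^ 2 := by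
  have hz : 1 - conj (1 / 2 - I * lam) = 1 / 2 - I * lam := by
    simp only [map_sub, map_div₀, map_one, map_ofNat, map_mul, conj_I, conj_ofReal]; ring
  have hw : 1 - conj (1 / 2 + α - I * lam) = 1 / 2 - α - I * lam := by
    simp only [map_sub, map_add, map_div₀, map_one, map_ofNat, map_mul, conj_I, conj_ofReal]; ring
  have hsin_z : ‖sin (π * (1 / 2 - I * lam))‖ ^ 2 = Real.cosh (π * lam) ^ 2 := by
    simpa using norm_sin_pi_mul_half_add_sub_mul_I_sq 0 lam
  have ha2 : ‖a‖ ^ 2 = 1 - Real.sin (π * α) ^ 2 / Real.cosh (π * lam) ^ 2 := by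
    rw [ha, ← hw, norm_Gamma_sq_div_Gamma_mul_Gamma_one_sub_conj hz, div_pow,
      norm_sin_pi_mul_half_add_sub_mul_I_sq, hsin_z, sub_div,
      div_self (pow_pos (Real.cosh_pos _) 2).ne']
  have hb2 : ‖b‖ ^ 2 = Real.sin (π * α) ^ 2 / Real.cosh (π * lam) ^ 2 := by
    simp only [hb, norm_div, norm_mul, norm_I, one_mul, norm_real, Real.norm_eq_abs, div_pow,
      sq_abs]
  exact ⟨by rw [ha2, hb2]; ring, ha2⟩

/-- Zakharov–Shabat unitarity for the `α sech` potential: for `α ∈ (0,1)`, `α ≠ 1/2`,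
and real `λ`, the scattering data
`a(λ) = Γ(1/2 - iλ)²/(Γ(1/2 + α - iλ) Γ(1/2 - α - iλ))` and
`b(λ) = i sin(πα)/cosh(πλ)` satisfy `|a(λ)|² + |b(λ)|² = 1`; equivalently
`|Γ(1/2 - iλ)²/(Γ(1/2 + α - iλ) Γ(1/2 - α - iλ))|² = 1 - sin²(πα)/cosh²(πλ)`. -/
theorem zakharov_shabat_unitarity (α lam : ℝ) (hα : α ∈ Set.Ioo (0 : ℝ) 1)
    (hα' : α ≠ 1 / 2) (a b : ℂ)
    (ha : a = Complex.Gamma (1 / 2 - Complex.I * lam) ^ 2 /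
      (Complex.Gamma (1 / 2 + α - Complex.I * lam) *
        Complex.Gamma (1 / 2 - α - Complex.I * lam)))
    (hb : b = Complex.I * Real.sin (Real.pi * α) / Real.cosh (Real.pi * lam)) :
    ‖a‖ ^ 2 + ‖b‖ ^ 2 = 1 ∧
    ‖a‖ ^ 2 = 1 - Real.sin (Real.pi * α) ^ 2 / Real.cosh (Real.pi * lam) ^ 2 :=
  zakharov_shabat_unitarity_general α lam a b ha hb
end
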